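/- arXiv:1707.02849 — 9 statements merged into one kernel-verified Lean document; each statement's English description precedes it below -/
import Mathlib

section
/- Let n ≥ 1, let p1, p2 : Fin n → ℕ be positive processing times, and let σ : Fin n ≃ Fin n be a sequence of the jobs. Suppose S1, S2 : Fin n → ℝ are start times by position satisfying: no-idle on each machine, i.e. S1(j+1) = S1(j) + p1(σ j) and S2(j+1) = S2(j) + p2(σ j) for every j with j+1 < n, and no-wait for each job, i.e. S2(j) = S1(j) + p1(σ j) for every j. Then p2(σ j) = p1(σ (j+1)) for every j with j+1 < n. -/
/-- In a two-machine no-idle/no-wait flow shop schedule, consecutive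
positions must satisfy `p2 (σ j) = p1 (σ (j+1))`. -/
theorem stmt_0 (n : ℕ) (hn : 1 ≤ n) (p1 p2 : Fin n → ℕ)
    (hp1 : ∀ i, 0 < p1 i) (hp2 : ∀ i, 0 < p2 i)
    (σ : Fin n ≃ Fin n) (S1 S2 : Fin n → ℝ)
    (hni1 : ∀ j : Fin n, ∀ h : (j : ℕ) + 1 < n,
      S1 ⟨(j : ℕ) + 1, h⟩ = S1 j + (p1 (σ j) : ℝ))
    (hni2 : ∀ j : Fin n, ∀ h : (j : ℕ) + 1 < n,
      S2 ⟨(j : ℕ) + 1, h⟩ = S2 j + (p2 (σ j) : ℝ))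
    (hnw : ∀ j : Fin n, S2 j = S1 j + (p1 (σ j) : ℝ)) :
    ∀ j : Fin n, ∀ h : (j : ℕ) + 1 < n, p2 (σ j) = p1 (σ ⟨(j : ℕ) + 1, h⟩) := by
  intro j h
  have h1 := hni1 j h
  have h2 := hni2 j h
  have h3 := hnw j
  have h4 := hnw ⟨(j : ℕ) + 1, h⟩
  have : (p2 (σ j) : ℝ) = (p1 (σ ⟨(j : ℕ) + 1, h⟩) : ℝ) := by linarith
  exact_mod_cast this
end

section
/- Let n ≥ 1, let p1, p2 : Fin n → ℕ be positive processing times, and let σ : Fin n ≃ Fin n be a feasible sequence such that p1(σ 0) = p2(σ (n−1)). Then for every k, the cyclic rotation τ of σ defined by τ(j) = σ(j + k mod n) is also a feasible sequence; in particular there exist at least n feasible sequences, one starting with each job σ(k). -/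
/-- A sequence `σ` for a two-machine no-idle/no-wait flow shop instance is feasible
if `p2 (σ j) = p1 (σ (j+1))` for every position `j` with `j+1 < n`. -/
def FeasibleSeq (n : ℕ) (p1 p2 : Fin n → ℕ) (σ : Fin n ≃ Fin n) : Prop :=
  ∀ j : Fin n, ∀ h : (j : ℕ) + 1 < n, p2 (σ j) = p1 (σ ⟨(j : ℕ) + 1, h⟩)

/-- if a feasible sequence `σ` satisfies `p1 (σ 0) = p2 (σ (n-1))`, then
every cyclic rotation `τ (j) = σ (j + k)` (addition mod `n` in `Fin n`) is again a
feasible sequence; in particular, for every `k`, there is a feasible sequence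
starting with job `σ k`. -/
theorem stmt_3 (n : ℕ) (hn : 1 ≤ n) (p1 p2 : Fin n → ℕ)
    (hp1 : ∀ i, 0 < p1 i) (hp2 : ∀ i, 0 < p2 i)
    (σ : Fin n ≃ Fin n) (hσ : FeasibleSeq n p1 p2 σ)
    (hcyc : p1 (σ ⟨0, by omega⟩) = p2 (σ ⟨n - 1, by omega⟩)) :
    ∀ k : Fin n, ∃ τ : Fin n ≃ Fin n,
      (∀ j : Fin n, τ j = σ (j + k)) ∧ FeasibleSeq n p1 p2 τ ∧
      τ ⟨0, by omega⟩ = σ k := by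
  intro k
  have : NeZero n := ⟨by omega⟩
  refine ⟨(Equiv.addRight k).trans σ, fun j => rfl, ?_, ?_⟩
  · intro j h
    simp only [Equiv.trans_apply, Equiv.coe_addRight]
    have hmval : ((j + k : Fin n) : ℕ) = ((j : ℕ) + (k : ℕ)) % n := by
      rw [Fin.add_def]
    have hstep : ((⟨(j : ℕ) + 1, h⟩ : Fin n) + k : Fin n) =
        ⟨(((j + k : Fin n) : ℕ) + 1) % n, Nat.mod_lt _ (by omega)⟩ := by
      apply Fin.ext
      rw [Fin.add_def]
      simp only [Fin.val_mk]
      conv_rhs => rw [hmval, Nat.mod_add_mod]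
      congr 1
      omega
    rw [hstep]
    by_cases hlt : ((j + k : Fin n) : ℕ) + 1 < n
    · have e : (⟨(((j + k : Fin n) : ℕ) + 1) % n, Nat.mod_lt _ (by omega)⟩ : Fin n)
          = ⟨((j + k : Fin n) : ℕ) + 1, hlt⟩ := Fin.ext (Nat.mod_eq_of_lt hlt)
      rw [e]
      exact hσ (j + k) hlt
    · have hbd : ((j + k : Fin n) : ℕ) < n := (j + k).isLt
      have hm1 : ((j + k : Fin n) : ℕ) = n - 1 := by omega
      have e1 : (⟨(((j + k : Fin n) : ℕ) + 1) % n, Nat.mod_lt _ (by omega)⟩ : Fin n)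
          = ⟨0, by omega⟩ := Fin.ext (by
            show (((j + k : Fin n) : ℕ) + 1) % n = 0
            rw [show ((j + k : Fin n) : ℕ) + 1 = n by omega, Nat.mod_self])
      have e2 : (j + k : Fin n) = ⟨n - 1, by omega⟩ := Fin.ext hm1
      rw [e1]
      exact (congrArg p2 (congrArg σ e2)).trans hcyc.symm
  · simp only [Equiv.trans_apply, Equiv.coe_addRight]
    congr 1
    apply Fin.ext
    rw [Fin.add_def]
    simp [Nat.mod_eq_of_lt k.isLt]
end

section
/- Let n ≥ 1 and let p1, p2 : Fin n → ℕ be positive processing times. For v ∈ ℕ let d(v) = |{i : p1 i = v}| − |{i : p2 i = v}| (as an integer). Then a feasible sequence exists if and only if both of the following hold: (i) either d(v) = 0 for every v, or there exist two distinct values u, w with d(u) = 1, d(w) = −1 and d(v) = 0 for every other v; and (ii) the instance is connected, i.e. the equivalence relation on Fin n generated by the relation 'i ~ j iff the sets {p1 i, p2 i} and {p1 j, p2 j} intersect' relates every pair of jobs. -/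
/-- The degree balance `d(v) = |{i : p1 i = v}| − |{i : p2 i = v}|` of a value `v`. -/
def degBal (n : ℕ) (p1 p2 : Fin n → ℕ) (v : ℕ) : ℤ :=
  ((Finset.univ.filter (fun i : Fin n => p1 i = v)).card : ℤ)
    - ((Finset.univ.filter (fun i : Fin n => p2 i = v)).card : ℤ)

open Finset

theorem Relation.EqvGen.exists_rel_of_mem_of_notMem {β : Type*} {r : β → β → Prop} {a b : β}
    {P : Set β} (h : Relation.EqvGen r a b) (ha : a ∈ P) (hb : b ∉ P) :
    ∃ i ∈ P, ∃ j ∉ P, r i j ∨ r j i := by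
  by_contra! hcross
  have hiff : ∀ i j, Relation.EqvGen r i j → (i ∈ P ↔ j ∈ P) := by
    intro i j hij
    induction hij with
    | rel i j hij =>
      exact ⟨fun hi => by_contra fun hj => (hcross i hi j hj).1 hij,
        fun hj => by_contra fun hi => (hcross j hj i hi).2 hij⟩
    | refl => rfl
    | symm _ _ _ ih => exact ih.symm
    | trans _ _ _ _ _ ih ih' => exact ih.trans ih'
  exact hb ((hiff a b h).mp ha)

namespace Multidigraph

variable {ι α : Type*} (s t : ι → α)

inductive IsWalk : α → List ι → α → Prop
  | nil (u : α) : IsWalk u [] u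
  | cons {e : ι} {l : List ι} {x : α} : IsWalk (t e) l x → IsWalk (s e) (e :: l) x

structure IsTrail (S : Finset ι) (u : α) (l : List ι) (x : α) : Prop where
  isWalk : IsWalk s t u l x
  nodup : l.Nodup
  subset : ∀ e ∈ l, e ∈ S

def SharesEndpoint (a b : ι) : Prop :=
  (({s a, t a} : Set α) ∩ {s b, t b}).Nonempty

def balance [DecidableEq α] (S : Finset ι) (v : α) : ℤ :=
  ∑ e ∈ S, ((if s e = v then 1 else 0) - if t e = v then 1 else 0)

variable {s t}

namespace IsWalk

variable {u x y : α} {l : List ι}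

theorem append {l' : List ι} (h : IsWalk s t u l x) (h' : IsWalk s t x l' y) :
    IsWalk s t u (l ++ l') y := by
  induction h with
  | nil => exact h'
  | cons _ ih => exact .cons (ih h')

theorem src_head (h : IsWalk s t u l x) : ∀ e ∈ l.head?, s e = u := by
  cases h <;> simp

theorem isChain (h : IsWalk s t u l x) : l.IsChain (fun a b => t a = s b) := by
  induction h with
  | nil => exact .nil
  | cons h ih => exact ih.cons fun _ he => (h.src_head _ he).symm

theorem exists_of_isChain_cons {e : ι}
    (hc : (e :: l).IsChain (fun a b => t a = s b)) : ∃ x, IsWalk s t (s e) (e :: l) x := by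
  induction l generalizing e with
  | nil => exact ⟨t e, .cons (.nil _)⟩
  | cons e' l ih =>
    obtain ⟨hee', hc⟩ := List.isChain_cons_cons.mp hc
    obtain ⟨x, hx⟩ := ih hc
    exact ⟨x, .cons (hee' ▸ hx)⟩

-- A walk from `u` along `l` visits the vertices `u :: l.map t`.
theorem exists_split (h : IsWalk s t u l x) (hy : y ∈ u :: l.map t) :
    ∃ a b, l = a ++ b ∧ IsWalk s t u a y ∧ IsWalk s t y b x := by
  induction h with
  | nil u =>
    obtain rfl : y = u := by simpa using hy
    exact ⟨[], [], rfl, .nil _, .nil _⟩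
  | @cons e l x h ih =>
    rcases List.mem_cons.mp hy with rfl | hy
    · exact ⟨[], e :: l, rfl, .nil _, .cons h⟩
    · obtain ⟨a, b, rfl, ha, hb⟩ := ih (by simpa using hy)
      exact ⟨e :: a, b, rfl, .cons ha, hb⟩

theorem exists_splice {C : List ι} (h : IsWalk s t u l x) (hy : y ∈ u :: l.map t)
    (hC : IsWalk s t y C y) : ∃ l', IsWalk s t u l' x ∧ l'.Perm (l ++ C) := by
  obtain ⟨a, b, rfl, ha, hb⟩ := h.exists_split hy
  exact ⟨a ++ (C ++ b), ha.append (hC.append hb),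
    (List.perm_append_comm.append_left a).trans (by simp)⟩

theorem mem_support {e : ι} (h : IsWalk s t u l x) (he : e ∈ l) :
    s e ∈ u :: l.map t ∧ t e ∈ u :: l.map t := by
  induction h with
  | nil => simp at he
  | cons h ih =>
    rcases List.mem_cons.mp he with rfl | he
    · simp
    · have := ih he
      simp only [List.map_cons, List.mem_cons] at this ⊢
      tauto

theorem sum_map_balance [DecidableEq α] (h : IsWalk s t u l x) (v : α) :
    (l.map fun e => ((if s e = v then 1 else 0) - if t e = v then 1 else 0 : ℤ)).sum
      = (if u = v then 1 else 0) - if x = v then 1 else 0 := by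
  induction h with
  | nil => simp
  | cons _ ih => rw [List.map_cons, List.sum_cons, ih]; ring

theorem eqvGen_sharesEndpoint (h : IsWalk s t u l x) {a b : ι} (ha : a ∈ l) (hb : b ∈ l) :
    Relation.EqvGen (SharesEndpoint s t) a b := by
  have key : ∀ {u l x}, IsWalk s t u l x → ∀ a ∈ l, ∀ c, u ∈ ({s c, t c} : Set α) →
      Relation.EqvGen (SharesEndpoint s t) a c := by
    intro u l x h
    induction h with
    | nil => simp
    | @cons e l x h ih =>
      have he : ∀ c, s e ∈ ({s c, t c} : Set α) → Relation.EqvGen (SharesEndpoint s t) e c :=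
        fun c hc => .rel _ _ ⟨s e, by simp, hc⟩
      intro a ha c hc
      rcases List.mem_cons.mp ha with rfl | ha
      · exact he c hc
      · exact .trans _ _ _ (ih a ha e (by simp)) (he c hc)
  obtain ⟨e, l', rfl⟩ := List.exists_cons_of_ne_nil (List.ne_nil_of_mem ha)
  have hu : u ∈ ({s e, t e} : Set α) := by simp [h.src_head e rfl]
  exact .trans _ _ _ (key h a ha e hu) (.symm _ _ (key h b hb e hu))

theorem exists_incident_notMem (hconn : ∀ i j, Relation.EqvGen (SharesEndpoint s t) i j)
    (h : IsWalk s t u l x) {e : ι} (he : u ∈ ({s e, t e} : Set α)) {g₀ : ι} (hg₀ : g₀ ∉ l) :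
    ∃ g ∉ l, ∃ y ∈ u :: l.map t, y ∈ ({s g, t g} : Set α) := by
  by_cases hel : e ∈ l
  · obtain ⟨i, hi, j, hj, hij⟩ := (hconn e g₀).exists_rel_of_mem_of_notMem
      (P := {g | g ∈ l}) hel hg₀
    obtain ⟨y, hyi, hyj⟩ : ∃ y, y ∈ ({s i, t i} : Set α) ∧ y ∈ ({s j, t j} : Set α) := by
      rcases hij with ⟨y, hyi, hyj⟩ | ⟨y, hyj, hyi⟩ <;> exact ⟨y, hyi, hyj⟩
    refine ⟨j, hj, y, ?_, hyj⟩
    rcases hyi with rfl | rfl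
    exacts [(h.mem_support hi).1, (h.mem_support hi).2]
  · exact ⟨e, hel, u, List.mem_cons_self, he⟩

end IsWalk

theorem isChain_iff_exists_isWalk [Nonempty α] {l : List ι} :
    l.IsChain (fun a b => t a = s b) ↔ ∃ u x, IsWalk s t u l x := by
  refine ⟨fun hc => ?_, fun ⟨_, _, h⟩ => h.isChain⟩
  cases l with
  | nil => exact ⟨Classical.arbitrary α, _, .nil _⟩
  | cons e l => exact ⟨s e, IsWalk.exists_of_isChain_cons hc⟩

theorem balance_sdiff [DecidableEq ι] [DecidableEq α] {S T : Finset ι} (hTS : T ⊆ S) (v : α) :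
    balance s t (S \ T) v = balance s t S v - balance s t T v :=
  eq_sub_of_add_eq (Finset.sum_sdiff hTS)

variable (s t) in
theorem exists_longest_trail [Fintype ι] (S : Finset ι) (u : α) :
    ∃ l x, IsTrail s t S u l x ∧ ∀ l' x', IsTrail s t S u l' x' → l'.length ≤ l.length := by
  have hfin : {l : List ι | ∃ x, IsTrail s t S u l x}.Finite :=
    (Set.finite_coe_iff.mp (inferInstance : Finite {l : List ι // l.Nodup})).subset
      fun _ ⟨_, h⟩ => h.nodup
  obtain ⟨l, ⟨x, hl⟩, hmax⟩ :=
    Set.exists_max_image _ List.length hfin ⟨[], u, .nil _, List.nodup_nil, by simp⟩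
  exact ⟨l, x, hl, fun l' x' hl' => hmax l' ⟨x', hl'⟩⟩

namespace IsTrail

variable {S : Finset ι} {u x : α} {l : List ι}

theorem mem_of_longest (h : IsTrail s t S u l x)
    (hmax : ∀ l' x', IsTrail s t S u l' x' → l'.length ≤ l.length) {g : ι} (hg : g ∈ S)
    (hgx : s g = x) : g ∈ l := by
  by_contra hgl
  have hext : IsTrail s t S u (l ++ [g]) (t g) :=
    ⟨h.isWalk.append (hgx ▸ .cons (.nil _)), h.nodup.append (List.nodup_singleton g) (by simpa),
      fun e he => (List.mem_append.mp he).elim (h.subset e)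
        fun he => List.mem_singleton.mp he ▸ hg⟩
  simpa using hmax _ _ hext

variable [DecidableEq ι] [DecidableEq α]

theorem balance_toFinset (h : IsTrail s t S u l x) (v : α) :
    balance s t l.toFinset v = (if u = v then 1 else 0) - if x = v then 1 else 0 := by
  rw [balance, List.sum_toFinset _ h.nodup, h.isWalk.sum_map_balance]

theorem balance_le (h : IsTrail s t S u l x) (hmax : ∀ g ∈ S, s g = x → g ∈ l) :
    balance s t S x ≤ (if u = x then 1 else 0) - 1 := by
  have hsub : l.toFinset ⊆ S := fun e he => h.subset e (List.mem_toFinset.mp he)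
  have hrest : balance s t (S \ l.toFinset) x ≤ 0 := Finset.sum_nonpos fun e he => by
    rw [mem_sdiff, List.mem_toFinset] at he
    rw [if_neg fun hex => he.2 (hmax e he.1 hex)]
    split_ifs <;> norm_num
  have := balance_sdiff (s := s) (t := t) hsub x
  rw [h.balance_toFinset, if_pos rfl] at this
  linarith

theorem balance_le_of_longest (h : IsTrail s t S u l x)
    (hmax : ∀ l' x', IsTrail s t S u l' x' → l'.length ≤ l.length) :
    balance s t S x ≤ (if u = x then 1 else 0) - 1 :=
  h.balance_le fun _ hg hgx => h.mem_of_longest hmax hg hgx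

end IsTrail

theorem exists_src_eq_of_balance_nonneg [DecidableEq α] {S : Finset ι} {y : α}
    (hb : 0 ≤ balance s t S y) {g : ι} (hg : g ∈ S) (hy : y ∈ ({s g, t g} : Set α)) :
    ∃ g' ∈ S, s g' = y := by
  by_contra! hsrc
  simp only [Set.mem_insert_iff, Set.mem_singleton_iff] at hy
  have hgy : t g = y := (hy.resolve_left (hsrc g hg).symm).symm
  have : balance s t S y < ∑ e ∈ S, 0 :=
    Finset.sum_lt_sum (fun e he => by simp only [if_neg (hsrc e he)]; split_ifs <;> norm_num)
      ⟨g, hg, by simp [hsrc g hg, hgy]⟩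
  rw [sum_const_zero] at this
  linarith

theorem exists_closed_trail [DecidableEq ι] [Fintype ι] [DecidableEq α] {S : Finset ι}
    (hbal : ∀ v, balance s t S v = 0) {g : ι} (hg : g ∈ S) {y : α}
    (hy : y ∈ ({s g, t g} : Set α)) : ∃ C ≠ [], IsTrail s t S y C y := by
  obtain ⟨g', hg', rfl⟩ := exists_src_eq_of_balance_nonneg (hbal y).ge hg hy
  obtain ⟨C, x, hC, hmax⟩ := exists_longest_trail s t S (s g')
  have hx : s g' = x := by
    by_contra hx
    simpa [hbal, hx] using hC.balance_le_of_longest hmax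
  subst hx
  refine ⟨C, fun hC0 => ?_, hC⟩
  simpa [hC0] using hmax [g'] _ ⟨.cons (.nil _), List.nodup_singleton g', by simpa⟩

theorem exists_eulerian_trail_from [DecidableEq ι] [Fintype ι] [DecidableEq α]
    (hconn : ∀ i j, Relation.EqvGen (SharesEndpoint s t) i j) {u w : α} {e : ι}
    (he : u ∈ ({s e, t e} : Set α))
    (hbal : ∀ v, balance s t univ v = (if u = v then 1 else 0) - if w = v then 1 else 0) :
    ∃ l, IsWalk s t u l w ∧ l.Nodup ∧ ∀ g, g ∈ l := by
  obtain ⟨l, x, hl, hmax⟩ := exists_longest_trail s t univ u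
  obtain rfl : x = w := by
    by_contra hxw
    simpa [hbal, Ne.symm hxw] using hl.balance_le_of_longest hmax
  refine ⟨l, hl.isWalk, hl.nodup, fun g₀ => by_contra fun hg₀ => ?_⟩
  have hrest : ∀ v, balance s t (univ \ l.toFinset) v = 0 := fun v => by
    rw [balance_sdiff (subset_univ _), hbal, hl.balance_toFinset, sub_self]
  obtain ⟨g, hgl, y, hy, hgy⟩ := hl.isWalk.exists_incident_notMem hconn he hg₀
  obtain ⟨C, hCne, hC⟩ := exists_closed_trail hrest (by simpa using hgl) hgy
  obtain ⟨l', hl', hperm⟩ := hl.isWalk.exists_splice hy hC.isWalk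
  have hnd : (l ++ C).Nodup := hl.nodup.append hC.nodup fun a hal haC => by
    simpa [hal] using hC.subset a haC
  have := hmax l' x ⟨hl', hperm.nodup_iff.mpr hnd, fun _ _ => mem_univ _⟩
  rw [hperm.length_eq, List.length_append] at this
  exact hCne (List.eq_nil_of_length_eq_zero (by omega))

theorem exists_eulerian_trail [DecidableEq ι] [Fintype ι] [Nonempty ι] [DecidableEq α]
    (hconn : ∀ i j, Relation.EqvGen (SharesEndpoint s t) i j)
    (hbal : ∃ u w, ∀ v, balance s t univ v = (if u = v then 1 else 0) - if w = v then 1 else 0) :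
    ∃ u l w, IsWalk s t u l w ∧ l.Nodup ∧ ∀ g, g ∈ l := by
  obtain ⟨u, w, hbal⟩ := hbal
  by_cases huw : u = w
  · subst huw
    let e := Classical.arbitrary ι
    obtain ⟨l, hl⟩ := exists_eulerian_trail_from hconn (u := s e) (w := s e) (e := e) (by simp)
      (by simp [hbal])
    exact ⟨s e, l, s e, hl⟩
  · have hu : balance s t univ u ≠ 0 := by simp [hbal, Ne.symm huw]
    obtain ⟨e, -, he⟩ := Finset.exists_ne_zero_of_sum_ne_zero hu
    have hu : u ∈ ({s e, t e} : Set α) := by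
      by_contra hu
      simp only [Set.mem_insert_iff, Set.mem_singleton_iff, not_or] at hu
      simp [Ne.symm hu.1, Ne.symm hu.2] at he
    obtain ⟨l, hl⟩ := exists_eulerian_trail_from hconn hu hbal
    exact ⟨u, l, w, hl⟩

end Multidigraph

open Multidigraph

theorem degree_condition_iff {α : Type*} [DecidableEq α] [Nonempty α] {f : α → ℤ} :
    ((∀ v, f v = 0) ∨ ∃ u w, u ≠ w ∧ f u = 1 ∧ f w = -1 ∧ ∀ v, v ≠ u → v ≠ w → f v = 0) ↔
      ∃ u w, ∀ v, f v = (if u = v then 1 else 0) - if w = v then 1 else 0 := by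
  constructor
  · rintro (h | ⟨u, w, huw, hu, hw, h⟩)
    · exact ⟨Classical.arbitrary α, Classical.arbitrary α, by simp [h]⟩
    · refine ⟨u, w, fun v => ?_⟩
      by_cases hvu : u = v
      · subst hvu; simp [hu, Ne.symm huw]
      by_cases hvw : w = v
      · subst hvw; simp [hw, huw]
      simp [h v (Ne.symm hvu) (Ne.symm hvw), hvu, hvw]
  · rintro ⟨u, w, h⟩
    by_cases huw : u = w
    · left; simp [h, huw]
    · right
      exact ⟨u, w, huw, by simp [h, Ne.symm huw], by simp [h, huw],
        fun v hvu hvw => by simp [h, Ne.symm hvu, Ne.symm hvw]⟩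

theorem degBal_eq_balance {n : ℕ} (p1 p2 : Fin n → ℕ) (v : ℕ) :
    degBal n p1 p2 v = balance p1 p2 univ v := by
  rw [degBal, balance, Finset.sum_sub_distrib, Finset.card_filter, Finset.card_filter]
  push_cast
  rfl

theorem exists_feasibleSeq_iff {n : ℕ} {p1 p2 : Fin n → ℕ} :
    (∃ σ, FeasibleSeq n p1 p2 σ) ↔
      ∃ l : List (Fin n), l.Nodup ∧ (∀ i, i ∈ l) ∧ l.IsChain (fun a b => p2 a = p1 b) := by
  constructor
  · rintro ⟨σ, hσ⟩
    exact ⟨List.ofFn σ, List.nodup_ofFn.mpr σ.injective,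
      fun i => List.mem_ofFn.mpr ⟨σ.symm i, by simp⟩,
      List.isChain_ofFn.mpr fun i hi => hσ ⟨i, _⟩ hi⟩
  · rintro ⟨l, hnd, hall, hc⟩
    let e := hnd.getEquivOfForallMemList l hall
    have hlen : l.length = n := by simpa using Fintype.card_congr e
    refine ⟨(finCongr hlen).symm.trans e, fun j hj => ?_⟩
    simpa [e] using hc.getElem j (by omega)

theorem stmt_6_general (n : ℕ) (hn : 1 ≤ n) (p1 p2 : Fin n → ℕ) :
    (∃ σ : Fin n ≃ Fin n, FeasibleSeq n p1 p2 σ) ↔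
      (((∀ v : ℕ, degBal n p1 p2 v = 0) ∨
          (∃ u w : ℕ, u ≠ w ∧ degBal n p1 p2 u = 1 ∧ degBal n p1 p2 w = -1 ∧
            ∀ v : ℕ, v ≠ u → v ≠ w → degBal n p1 p2 v = 0))
        ∧ ∀ i j : Fin n,
            Relation.EqvGen
              (fun a b : Fin n => (({p1 a, p2 a} : Set ℕ) ∩ {p1 b, p2 b}).Nonempty)
              i j) := by
  rw [exists_feasibleSeq_iff, degree_condition_iff]
  simp only [isChain_iff_exists_isWalk, degBal_eq_balance]
  constructor
  · rintro ⟨l, hnd, hall, u, x, hl⟩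
    have hcover : l.toFinset = univ := eq_univ_of_forall fun i => List.mem_toFinset.mpr (hall i)
    exact ⟨⟨u, x, hcover ▸ IsTrail.balance_toFinset ⟨hl, hnd, fun _ _ => mem_univ _⟩⟩,
      fun i j => hl.eqvGen_sharesEndpoint (hall i) (hall j)⟩
  · rintro ⟨hbal, hconn⟩
    have : Nonempty (Fin n) := ⟨⟨0, hn⟩⟩
    obtain ⟨u, l, x, hl, hnd, hall⟩ := exists_eulerian_trail hconn hbal
    exact ⟨l, hnd, hall, u, x, hl⟩

/-- a feasible sequence exists iff (i) either all degree balances are 0,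
or exactly one value has balance 1, one has balance -1 and all others 0; and
(ii) the instance is connected: the equivalence relation generated by
"the value sets `{p1 i, p2 i}` and `{p1 j, p2 j}` intersect" relates all jobs. -/
theorem stmt_6 (n : ℕ) (hn : 1 ≤ n) (p1 p2 : Fin n → ℕ)
    (hp1 : ∀ i, 0 < p1 i) (hp2 : ∀ i, 0 < p2 i) :
    (∃ σ : Fin n ≃ Fin n, FeasibleSeq n p1 p2 σ) ↔
      (((∀ v : ℕ, degBal n p1 p2 v = 0) ∨
          (∃ u w : ℕ, u ≠ w ∧ degBal n p1 p2 u = 1 ∧ degBal n p1 p2 w = -1 ∧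
            ∀ v : ℕ, v ≠ u → v ≠ w → degBal n p1 p2 v = 0))
        ∧ ∀ i j : Fin n,
            Relation.EqvGen
              (fun a b : Fin n => (({p1 a, p2 a} : Set ℕ) ∩ {p1 b, p2 b}).Nonempty)
              i j) :=
  stmt_6_general n hn p1 p2
end

section
/- Let n ≥ 0 and let R : Fin n → Fin n → Prop be a relation (a digraph) such that for every pair of vertices i, j, the successor sets S_i = {k : R i k} and S_j = {k : R j k} are either equal or disjoint. Then there exist functions p1, p2 : Fin n → ℕ with p1 i > 0 and p2 i > 0 for all i, such that for all i, j: R i j ↔ p2 i = p1 j. -/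
/-- every digraph on `Fin n` in which each pair of vertices has either
equal or disjoint successor sets arises as the adjacency digraph `R i j ↔ p2 i = p1 j`
of a two-machine no-idle/no-wait flow shop instance with positive processing times. -/
theorem stmt_8 (n : ℕ) (R : Fin n → Fin n → Prop)
    (hR : ∀ i j : Fin n,
      ({k : Fin n | R i k} : Set (Fin n)) = {k : Fin n | R j k} ∨
        ({k : Fin n | R i k} : Set (Fin n)) ∩ {k : Fin n | R j k} = ∅) :
    ∃ p1 p2 : Fin n → ℕ, (∀ i, 0 < p1 i) ∧ (∀ i, 0 < p2 i) ∧
      ∀ i j : Fin n, R i j ↔ p2 i = p1 j := by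
  classical
  set S : Fin n → Set (Fin n) := fun i => {k | R i k} with hSdef
  have hSeq : ∀ i j : Fin n, (∃ k, R i k ∧ R j k) → S i = S j := by
    rintro i j ⟨k, hik, hjk⟩
    rcases hR i j with h | h
    · exact h
    · exfalso
      have : k ∈ ({k : Fin n | R i k} : Set (Fin n)) ∩ {k : Fin n | R j k} := ⟨hik, hjk⟩
      rw [h] at this
      exact this
  let m : Fin n → Fin n := fun i =>
    (Finset.univ.filter (fun i' => S i' = S i)).min' ⟨i, by simp⟩
  have hmS : ∀ i, S (m i) = S i := by
    intro i
    have := (Finset.univ.filter (fun i' => S i' = S i)).min'_mem ⟨i, by simp⟩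
    exact (Finset.mem_filter.1 this).2
  have hmeq : ∀ i j, S i = S j → m i = m j := by
    intro i j h
    simp only [m, h]
  refine ⟨(fun j => if h : ∃ i, R i j then 2 * (m h.choose).val + 2 else 3),
    (fun i => if ∃ k, R i k then 2 * (m i).val + 2 else 1),
    fun j => ?_, fun i => ?_, fun i j => ?_⟩
  · dsimp only; split <;> omega
  · dsimp only; split <;> omega
  · constructor
    · intro hij
      have h1 : ∃ k, R i k := ⟨j, hij⟩
      have h2 : ∃ i', R i' j := ⟨i, hij⟩
      simp only [if_pos h1, dif_pos h2]
      have hs : S i = S h2.choose := hSeq i h2.choose ⟨j, hij, h2.choose_spec⟩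
      rw [hmeq _ _ hs]
    · intro hpq
      by_cases h1 : ∃ k, R i k
      · by_cases h2 : ∃ i', R i' j
        · simp only [if_pos h1, dif_pos h2] at hpq
          have hm : m i = m h2.choose := Fin.ext (by omega)
          have hs : S i = S h2.choose := by
            rw [← hmS i, ← hmS h2.choose, hm]
          have hj : j ∈ S h2.choose := h2.choose_spec
          rw [← hs] at hj
          exact hj
        · simp only [if_pos h1, dif_neg h2] at hpq
          omega
      · by_cases h2 : ∃ i', R i' j
        · simp only [if_neg h1, dif_pos h2] at hpq
          omega
        · simp only [if_neg h1, dif_neg h2] at hpq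
          omega
end

section
/- Let m ≥ 2, n ≥ 1, let p : Fin m → Fin n → ℕ be positive processing times (p i j > 0 is the time of job j on machine i), and let σ : Fin n ≃ Fin n be a sequence. Suppose S : Fin m → Fin n → ℝ are start times by machine and position satisfying: no-idle on each machine, i.e. S i (j+1) = S i j + p i (σ j) for all i and all j with j+1 < n, and no-wait for each job, i.e. S (i+1) j = S i j + p i (σ j) for all j and all i with i+1 < m. Then p (i+1) (σ j) = p i (σ (j+1)) for every i with i+1 < m and every j with j+1 < n. -/
/-- in an m-machine no-idle/no-wait flow shop schedule, consecutive
machines and positions must satisfy `p (i+1) (σ j) = p i (σ (j+1))`. -/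
theorem stmt_9 (m n : ℕ) (hm : 2 ≤ m) (hn : 1 ≤ n)
    (p : Fin m → Fin n → ℕ) (hp : ∀ i j, 0 < p i j)
    (σ : Fin n ≃ Fin n) (S : Fin m → Fin n → ℝ)
    (hni : ∀ i : Fin m, ∀ j : Fin n, ∀ h : (j : ℕ) + 1 < n,
      S i ⟨(j : ℕ) + 1, h⟩ = S i j + (p i (σ j) : ℝ))
    (hnw : ∀ i : Fin m, ∀ h : (i : ℕ) + 1 < m, ∀ j : Fin n,
      S ⟨(i : ℕ) + 1, h⟩ j = S i j + (p i (σ j) : ℝ)) :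
    ∀ i : Fin m, ∀ hi : (i : ℕ) + 1 < m, ∀ j : Fin n, ∀ hj : (j : ℕ) + 1 < n,
      p ⟨(i : ℕ) + 1, hi⟩ (σ j) = p i (σ ⟨(j : ℕ) + 1, hj⟩) := by
  intro i hi j hj
  have h1 : S ⟨(i:ℕ)+1, hi⟩ ⟨(j:ℕ)+1, hj⟩
      = S i j + (p i (σ j) : ℝ) + (p ⟨(i:ℕ)+1, hi⟩ (σ j) : ℝ) := by
    rw [hni ⟨(i:ℕ)+1, hi⟩ j hj, hnw i hi j]
  have h2 : S ⟨(i:ℕ)+1, hi⟩ ⟨(j:ℕ)+1, hj⟩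
      = S i j + (p i (σ j) : ℝ) + (p i (σ ⟨(j:ℕ)+1, hj⟩) : ℝ) := by
    rw [hnw i hi ⟨(j:ℕ)+1, hj⟩, hni i j hj]
  have := h1.symm.trans h2
  have : (p ⟨(i:ℕ)+1, hi⟩ (σ j) : ℝ) = (p i (σ ⟨(j:ℕ)+1, hj⟩) : ℝ) := by linarith
  exact_mod_cast this
end

section
/- Let m ≥ 2, n ≥ 1, let p : Fin m → Fin n → ℕ be positive processing times, and let σ be a feasible sequence such that p i (σ 0) = p (i+1) (σ (n−1)) for every i with i+1 < m. Then for every k, the cyclic rotation τ of σ defined by τ(j) = σ(j + k mod n) is also a feasible sequence; in particular there exist at least n feasible sequences, one starting with each job. -/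
/-- A sequence `σ` for an m-machine no-idle/no-wait flow shop instance is feasible if
`p (i+1) (σ j) = p i (σ (j+1))` for every machine `i` with `i+1 < m` and every
position `j` with `j+1 < n`. -/
def FeasibleSeqM (m n : ℕ) (p : Fin m → Fin n → ℕ) (σ : Fin n ≃ Fin n) : Prop :=
  ∀ i : Fin m, ∀ hi : (i : ℕ) + 1 < m, ∀ j : Fin n, ∀ hj : (j : ℕ) + 1 < n,
    p ⟨(i : ℕ) + 1, hi⟩ (σ j) = p i (σ ⟨(j : ℕ) + 1, hj⟩)

/-- if a feasible sequence `σ` of an m-machine instance satisfies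
`p i (σ 0) = p (i+1) (σ (n-1))` for every `i` with `i+1 < m`, then every cyclic
rotation `τ (j) = σ (j + k)` (addition mod `n` in `Fin n`) is again feasible; in
particular, for every `k` there is a feasible sequence starting with job `σ k`. -/
theorem stmt_11 (m n : ℕ) (hm : 2 ≤ m) (hn : 1 ≤ n)
    (p : Fin m → Fin n → ℕ) (hp : ∀ i j, 0 < p i j)
    (σ : Fin n ≃ Fin n) (hσ : FeasibleSeqM m n p σ)
    (hcyc : ∀ i : Fin m, ∀ hi : (i : ℕ) + 1 < m,
      p i (σ ⟨0, by omega⟩) = p ⟨(i : ℕ) + 1, hi⟩ (σ ⟨n - 1, by omega⟩)) :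
    ∀ k : Fin n, ∃ τ : Fin n ≃ Fin n,
      (∀ j : Fin n, τ j = σ (j + k)) ∧ FeasibleSeqM m n p τ ∧
      τ ⟨0, by omega⟩ = σ k := by
  intro k
  have : NeZero n := ⟨by omega⟩
  refine ⟨(Equiv.addRight k).trans σ, fun j => rfl, ?_, ?_⟩
  · intro i hi j hj
    show p _ (σ (j + k)) = p i (σ (⟨(j : ℕ) + 1, hj⟩ + k))
    have hvlt : ((j + k : Fin n) : ℕ) < n := (j + k).isLt
    have hval : ((j + k : Fin n) : ℕ) = ((j : ℕ) + (k : ℕ)) % n := rfl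
    have hval2 : ((⟨(j : ℕ) + 1, hj⟩ + k : Fin n) : ℕ)
        = (((j + k : Fin n) : ℕ) + 1) % n := by
      show ((j : ℕ) + 1 + (k : ℕ)) % n = (((j : ℕ) + (k : ℕ)) % n + 1) % n
      rw [Nat.mod_add_mod]
      congr 1
      omega
    by_cases h : ((j + k : Fin n) : ℕ) + 1 < n
    · have heq : (⟨(j : ℕ) + 1, hj⟩ + k : Fin n) = ⟨((j + k : Fin n) : ℕ) + 1, h⟩ := by
        apply Fin.ext
        rw [hval2, Nat.mod_eq_of_lt h]
      rw [heq]
      exact hσ i hi (j + k) h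
    · have h1 : ((j + k : Fin n) : ℕ) = n - 1 := by omega
      have hsum : ((j + k : Fin n) : ℕ) + 1 = n := by omega
      have heq : (⟨(j : ℕ) + 1, hj⟩ + k : Fin n) = ⟨0, by omega⟩ := by
        apply Fin.ext
        simp only [hval2, hsum, Nat.mod_self]
      have heq2 : (j + k : Fin n) = ⟨n - 1, by omega⟩ := Fin.ext h1
      rw [heq]
      simp only [heq2]
      exact (hcyc i hi).symm
  · show σ (⟨0, by omega⟩ + k) = σ k
    congr 1
    apply Fin.ext
    show (0 + (k : ℕ)) % n = (k : ℕ)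
    rw [Nat.zero_add, Nat.mod_eq_of_lt k.isLt]
end

section
/- Let m ≥ 2, n ≥ 1, let p : Fin m → Fin n → ℕ be positive processing times, and let e : (Fin (m−1) → ℕ) → ℕ be any injective function. Define a two-machine instance by q1 j = e (fun i => p i.castSucc j) (the vector of processing times of job j on machines 1,…,m−1) and q2 j = e (fun i => p i.succ j) (the vector on machines 2,…,m). Then a sequence σ : Fin n ≃ Fin n is feasible for the m-machine instance (i.e. p (i+1) (σ j) = p i (σ (j+1)) for all i with i+1 < m and j with j+1 < n) if and only if σ is feasible for the two-machine instance (i.e. q2 (σ j) = q1 (σ (j+1)) for all j with j+1 < n). -/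
/-- reduction of the m-machine problem to the two-machine one. Given an
injective encoding `e` of `(m-1)`-vectors, define the two-machine instance
`q1 j = e (p 0 j, …, p (m-2) j)` and `q2 j = e (p 1 j, …, p (m-1) j)`. Then `σ` is
feasible for the m-machine instance iff it is feasible for the two-machine instance,
i.e. `q2 (σ j) = q1 (σ (j+1))` for all `j` with `j+1 < n`. -/
theorem stmt_13 (m n : ℕ) (hm : 2 ≤ m) (hn : 1 ≤ n)
    (p : Fin m → Fin n → ℕ) (hp : ∀ i j, 0 < p i j)
    (e : (Fin (m - 1) → ℕ) → ℕ) (he : Function.Injective e)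
    (q1 q2 : Fin n → ℕ)
    (hq1 : ∀ j : Fin n, q1 j = e (fun i : Fin (m - 1) => p ⟨(i : ℕ), by omega⟩ j))
    (hq2 : ∀ j : Fin n, q2 j = e (fun i : Fin (m - 1) => p ⟨(i : ℕ) + 1, by omega⟩ j))
    (σ : Fin n ≃ Fin n) :
    FeasibleSeqM m n p σ ↔
      ∀ j : Fin n, ∀ hj : (j : ℕ) + 1 < n, q2 (σ j) = q1 (σ ⟨(j : ℕ) + 1, hj⟩) := by
  constructor
  · intro h j hj
    rw [hq1, hq2]
    congr 1
    funext i
    have hlt : (i : ℕ) + 1 < m := by omega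
    exact h ⟨(i : ℕ), by omega⟩ hlt j hj
  · intro h i hi j hj
    have := h j hj
    rw [hq1, hq2] at this
    have := he this
    have := congrFun this ⟨(i : ℕ), by omega⟩
    simpa using this
end

section
/- Let m ≥ 1 and let sX, sY, t : Fin m → ℕ be positive with Σ_i t i = Σ_i sX i + Σ_i sY i. If the NMTS instance (sX, sY, t) has a solution (bijections α, β : Fin m ≃ Fin m with sX(α i) + sY(β i) = t i for all i), then the constructed two-machine job shop instance admits a feasible no-idle/no-wait schedule with makespan exactly L + 1, where L = 2m + 3mP + Σ_i t i and P = Σ_i t i + Σ_i sX i + Σ_i sY i. -/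
/-- M1 processing times of the constructed instance: x-jobs (`j < m`) and y-jobs
(`m ≤ j < 2m`) take time 1, the t-job of index `i` takes time `t i + 3P`. -/
def jsA (m : ℕ) (t : Fin m → ℕ) (P : ℕ) : Fin (3 * m) → ℕ := fun j =>
  if _ : (j : ℕ) < 2 * m then 1 else t ⟨(j : ℕ) - 2 * m, by omega⟩ + 3 * P

/-- M2 processing times of the constructed instance: the x-job of index `i` takes
time `sX i + P`, the y-job of index `i` takes `sY i + 2P`, t-jobs take time 2. -/
def jsB (m : ℕ) (sX sY : Fin m → ℕ) (P : ℕ) : Fin (3 * m) → ℕ := fun j =>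
  if h1 : (j : ℕ) < m then sX ⟨(j : ℕ), h1⟩ + P
  else if _ : (j : ℕ) < 2 * m then sY ⟨(j : ℕ) - m, by omega⟩ + 2 * P
  else 2

/-- Routes: x-jobs and t-jobs go M1→M2 (`true`), y-jobs go M2→M1 (`false`). -/
def jsRoute (m : ℕ) : Fin (3 * m) → Bool := fun j =>
  decide ((j : ℕ) < m ∨ 2 * m ≤ (j : ℕ))

/-- Start time of job `j` on a machine with processing times `c`, processing order
`π` and machine start time `s`: the machine works contiguously (no idle time). -/
def startTime (N : ℕ) (c : Fin N → ℕ) (π : Fin N ≃ Fin N) (s : ℕ) (j : Fin N) : ℕ :=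
  s + ∑ l ∈ Finset.univ.filter (fun l : Fin N => l < π.symm j), c (π l)

/-- A no-idle/no-wait two-machine job shop schedule: each machine processes all jobs
contiguously in orders `π1`, `π2` from start times `s1`, `s2`, and each job's second
operation (according to its route) starts exactly when its first one completes. -/
def JSSchedule (N : ℕ) (a b : Fin N → ℕ) (route : Fin N → Bool)
    (π1 π2 : Fin N ≃ Fin N) (s1 s2 : ℕ) : Prop :=
  ∀ j : Fin N,
    if route j then startTime N b π2 s2 j = startTime N a π1 s1 j + a j
    else startTime N a π1 s1 j = startTime N b π2 s2 j + b j

/-!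
Cut time into `m` blocks; block `k` has length `t k + 3P + 2` on both machines. On M1 it runs
`x (α k)`, `t k`, `y (β k)` (lengths `1`, `t k + 3P`, `1`) from time
`S k = ∑ k' < k, (t k' + 3P + 2)`, and on M2, started one unit later, it runs `x (α k)`,
`y (β k)`, `t k` (lengths `sX (α k) + P`, `sY (β k) + 2P`, `2`).
The matching `sX (α k) + sY (β k) = t k` is exactly what makes `t k` reach M2 at `S k + 1 + t k + 3P`
and `y (β k)` reach M1 then, so no job waits; each machine is busy for `L`, M2 from time `1`.
-/

open Finset

def blockPos (m n : ℕ) : Fin m × Fin n ≃ Fin (n * m) :=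
  finProdFinEquiv.trans (finCongr (Nat.mul_comm m n))

@[simp] lemma blockPos_val {m n : ℕ} (p : Fin m × Fin n) :
    (blockPos m n p : ℕ) = p.2 + n * p.1 := rfl

lemma blockPos_lt_blockPos_iff {m n : ℕ} {p q : Fin m × Fin n} :
    blockPos m n p < blockPos m n q ↔ p.1 < q.1 ∨ (p.1 = q.1 ∧ p.2 < q.2) := by
  obtain ⟨⟨k, hk⟩, ⟨r, hr⟩⟩ := p
  obtain ⟨⟨k', hk'⟩, ⟨r', hr'⟩⟩ := q
  simp only [Fin.lt_def, blockPos_val, Fin.ext_iff]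
  constructor
  · intro h
    rcases lt_trichotomy k k' with h' | rfl | h'
    · exact Or.inl h'
    · exact Or.inr ⟨rfl, by omega⟩
    · nlinarith
  · rintro (h | ⟨rfl, h⟩)
    · nlinarith
    · omega

def blockOrder {m n : ℕ} (σ : Equiv.Perm (Fin n)) (e : Fin n → Equiv.Perm (Fin m)) :
    Equiv.Perm (Fin (n * m)) :=
  (blockPos m n).symm.trans ((Equiv.prodComm _ _).trans ((σ.prodShear e).trans finProdFinEquiv))

@[simp] lemma blockOrder_blockPos {m n : ℕ} (σ : Equiv.Perm (Fin n))
    (e : Fin n → Equiv.Perm (Fin m)) (k : Fin m) (r : Fin n) :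
    blockOrder σ e (blockPos m n (k, r)) = finProdFinEquiv (σ r, e r k) := by
  simp [blockOrder]

lemma sum_eq_sum_blockPos {M : Type*} [AddCommMonoid M] {m n : ℕ} (f : Fin (n * m) → M)
    (π : Equiv.Perm (Fin (n * m))) :
    ∑ j, f j = ∑ k, ∑ r, f (π (blockPos m n (k, r))) := by
  rw [← Equiv.sum_comp π, ← Equiv.sum_comp (blockPos m n), Fintype.sum_prod_type]

lemma sum_filter_lt_blockPos {M : Type*} [AddCommMonoid M] {m n : ℕ}
    (f : Fin (n * m) → M) (k : Fin m) (r : Fin n) :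
    ∑ l ∈ univ.filter (· < blockPos m n (k, r)), f l =
      ∑ k' ∈ univ.filter (· < k), ∑ r', f (blockPos m n (k', r')) +
        ∑ r' ∈ univ.filter (· < r), f (blockPos m n (k, r')) := by
  have hsplit (k' : Fin m) (r' : Fin n) :
      (if blockPos m n (k', r') < blockPos m n (k, r) then f (blockPos m n (k', r')) else 0) =
        (if k' < k then f (blockPos m n (k', r')) else 0) +
          if k' = k then (if r' < r then f (blockPos m n (k, r')) else 0) else 0 := by
    by_cases hk : k' < k
    · simp [blockPos_lt_blockPos_iff, hk, hk.ne]
    · by_cases hk' : k' = k <;> simp [blockPos_lt_blockPos_iff, hk, hk']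
  simp_rw [sum_filter, ← (blockPos m n).sum_comp, Fintype.sum_prod_type, hsplit, sum_add_distrib,
    ← ite_sum_zero, sum_ite_eq']
  simp

lemma startTime_apply_self {N : ℕ} (c : Fin N → ℕ) (π : Equiv.Perm (Fin N)) (s : ℕ) (p : Fin N) :
    startTime N c π s (π p) = s + ∑ l ∈ univ.filter (· < p), c (π l) := by
  simp [startTime]

lemma startTime_blockPos {m n : ℕ} (c : Fin (n * m) → ℕ) (π : Equiv.Perm (Fin (n * m))) (s : ℕ)
    (k : Fin m) (r : Fin n) :
    startTime (n * m) c π s (π (blockPos m n (k, r))) =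
      s + ∑ k' ∈ univ.filter (· < k), ∑ r', c (π (blockPos m n (k', r'))) +
        ∑ r' ∈ univ.filter (· < r), c (π (blockPos m n (k, r'))) := by
  rw [startTime_apply_self, sum_filter_lt_blockPos, add_assoc]

/- Job `finProdFinEquiv (c, i) = c * m + i` is the `x`-, `y`- or `t`-job of index `i`
for `c = 0, 1, 2`. -/

section
variable {m : ℕ} (i : Fin m)

@[simp] lemma jsA_finProdFinEquiv (c : Fin 3) (t : Fin m → ℕ) (P : ℕ) :
    jsA m t P (finProdFinEquiv (c, i)) = ![1, 1, t i + 3 * P] c := by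
  have := i.2
  fin_cases c <;> simp [jsA, Nat.mul_comm m 2] <;> omega

@[simp] lemma jsB_finProdFinEquiv (c : Fin 3) (sX sY : Fin m → ℕ) (P : ℕ) :
    jsB m sX sY P (finProdFinEquiv (c, i)) = ![sX i + P, sY i + 2 * P, 2] c := by
  have := i.2
  fin_cases c <;> simp [jsB, Nat.mul_comm m 2] <;> omega

@[simp] lemma jsRoute_finProdFinEquiv (c : Fin 3) :
    jsRoute m (finProdFinEquiv (c, i)) = ![true, false, true] c := by
  have := i.2
  fin_cases c <;> simp [jsRoute] <;> omega
end

section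
variable {m : ℕ} (α β : Equiv.Perm (Fin m))

def orderM1 : Equiv.Perm (Fin (3 * m)) := blockOrder (Equiv.swap 1 2) ![α, 1, β]

def orderM2 : Equiv.Perm (Fin (3 * m)) := blockOrder 1 ![α, β, 1]

lemma orderM1_blockPos (k : Fin m) (r : Fin 3) :
    orderM1 α β (blockPos m 3 (k, r)) = orderM2 α β (blockPos m 3 (k, Equiv.swap 1 2 r)) := by
  fin_cases r <;> simp [orderM1, orderM2, Equiv.swap_apply_of_ne_of_ne]

lemma sum_filter_lt_fin_three (r : Fin 3) (g : Fin 3 → ℕ) :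
    ∑ r' ∈ univ.filter (· < r), g r' = ![0, g 0, g 0 + g 1] r := by
  fin_cases r <;> simp [sum_filter, Fin.sum_univ_three]

lemma sum_jsA_orderM1_blockPos (t : Fin m → ℕ) (P : ℕ) (k : Fin m) :
    ∑ r, jsA m t P (orderM1 α β (blockPos m 3 (k, r))) = t k + 3 * P + 2 := by
  simp [orderM1, Fin.sum_univ_three, Equiv.swap_apply_of_ne_of_ne]
  ring

lemma sum_jsB_orderM2_blockPos {sX sY t : Fin m → ℕ} (hmatch : ∀ i, sX (α i) + sY (β i) = t i)
    (P : ℕ) (k : Fin m) :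
    ∑ r, jsB m sX sY P (orderM2 α β (blockPos m 3 (k, r))) = t k + 3 * P + 2 := by
  simp [orderM2, Fin.sum_univ_three, ← hmatch k]
  ring

lemma startTime_orderM1 (t : Fin m → ℕ) (P : ℕ) (k : Fin m) (r : Fin 3) :
    startTime (3 * m) (jsA m t P) (orderM1 α β) 0 (orderM1 α β (blockPos m 3 (k, r))) =
      ∑ k' ∈ univ.filter (· < k), (t k' + 3 * P + 2) + ![0, 1, t k + 3 * P + 1] r := by
  rw [startTime_blockPos, sum_filter_lt_fin_three]
  simp only [sum_jsA_orderM1_blockPos, zero_add]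
  fin_cases r <;> simp [orderM1, Equiv.swap_apply_of_ne_of_ne]
  ring

lemma startTime_orderM2 {sX sY t : Fin m → ℕ} (hmatch : ∀ i, sX (α i) + sY (β i) = t i)
    (P : ℕ) (k : Fin m) (r : Fin 3) :
    startTime (3 * m) (jsB m sX sY P) (orderM2 α β) 1 (orderM2 α β (blockPos m 3 (k, r))) =
      1 + ∑ k' ∈ univ.filter (· < k), (t k' + 3 * P + 2) + ![0, sX (α k) + P, t k + 3 * P] r := by
  rw [startTime_blockPos, sum_filter_lt_fin_three]
  simp only [sum_jsB_orderM2_blockPos α β hmatch]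
  fin_cases r <;> simp [orderM2, ← hmatch k]
  ring
end

lemma jsSchedule_orderM1_orderM2 {m : ℕ} (α β : Equiv.Perm (Fin m)) {sX sY t : Fin m → ℕ}
    (hmatch : ∀ i, sX (α i) + sY (β i) = t i) (P : ℕ) :
    JSSchedule (3 * m) (jsA m t P) (jsB m sX sY P) (jsRoute m) (orderM1 α β) (orderM2 α β) 0 1 := by
  intro j
  obtain ⟨⟨k, r⟩, rfl⟩ := ((blockPos m 3).trans (orderM1 α β)).surjective j
  have h2 := startTime_orderM2 α β hmatch P k (Equiv.swap 1 2 r)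
  rw [← orderM1_blockPos] at h2
  rw [Equiv.trans_apply, startTime_orderM1, h2]
  have := hmatch k
  fin_cases r <;> simp [orderM1, Equiv.swap_apply_of_ne_of_ne] <;> omega

theorem stmt_15_general (m : ℕ) (sX sY t : Fin m → ℕ)
    (P L : ℕ) (hL : L = 2 * m + 3 * m * P + ∑ i, t i)
    (α β : Fin m ≃ Fin m) (hmatch : ∀ i, sX (α i) + sY (β i) = t i) :
    ∃ (π1 π2 : Fin (3 * m) ≃ Fin (3 * m)) (s1 s2 : ℕ),
      JSSchedule (3 * m) (jsA m t P) (jsB m sX sY P) (jsRoute m) π1 π2 s1 s2 ∧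
      max (s1 + ∑ j, jsA m t P j) (s2 + ∑ j, jsB m sX sY P j) = L + 1 := by
  refine ⟨orderM1 α β, orderM2 α β, 0, 1, jsSchedule_orderM1_orderM2 α β hmatch P, ?_⟩
  have hload : ∑ k, (t k + 3 * P + 2) = L := by
    simp [sum_add_distrib, hL]
    ring
  rw [sum_eq_sum_blockPos _ (orderM1 α β), sum_eq_sum_blockPos _ (orderM2 α β)]
  simp only [sum_jsA_orderM1_blockPos, sum_jsB_orderM2_blockPos α β hmatch, hload]
  omega

/-- if the NMTS instance `(sX, sY, t)` has a solution, the constructed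
two-machine job shop instance has a feasible no-idle/no-wait schedule with makespan
exactly `L + 1`. -/
theorem stmt_15 (m : ℕ) (hm : 1 ≤ m) (sX sY t : Fin m → ℕ)
    (hsX : ∀ i, 0 < sX i) (hsY : ∀ i, 0 < sY i) (ht : ∀ i, 0 < t i)
    (hsum : ∑ i, t i = ∑ i, sX i + ∑ i, sY i)
    (P L : ℕ) (hP : P = ∑ i, t i + ∑ i, sX i + ∑ i, sY i)
    (hL : L = 2 * m + 3 * m * P + ∑ i, t i)
    (α β : Fin m ≃ Fin m) (hmatch : ∀ i, sX (α i) + sY (β i) = t i) :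
    ∃ (π1 π2 : Fin (3 * m) ≃ Fin (3 * m)) (s1 s2 : ℕ),
      JSSchedule (3 * m) (jsA m t P) (jsB m sX sY P) (jsRoute m) π1 π2 s1 s2 ∧
      max (s1 + ∑ j, jsA m t P j) (s2 + ∑ j, jsB m sX sY P j) = L + 1 :=
  stmt_15_general m sX sY t P L hL α β hmatch
end

section
/- Let m ≥ 1 and let sX, sY, t : Fin m → ℕ be positive with Σ_i t i = Σ_i sX i + Σ_i sY i, and let L = 2m + 3mP + Σ_i t i with P = Σ_i t i + Σ_i sX i + Σ_i sY i. If the constructed two-machine job shop instance admits a feasible no-idle/no-wait schedule with makespan at most L + 1, then the NMTS instance (sX, sY, t) has a solution, i.e. there exist bijections α, β : Fin m ≃ Fin m with sX(α i) + sY(β i) = t i for all i. -/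
section aux
variable {N : ℕ}

lemma st_ge (c : Fin N → ℕ) (π : Fin N ≃ Fin N) (s : ℕ) (j : Fin N) :
    s ≤ startTime N c π s j := Nat.le_add_right _ _

lemma st_step (c : Fin N → ℕ) (π : Fin N ≃ Fin N) (s : ℕ) {j j' : Fin N}
    (h : π.symm j < π.symm j') :
    startTime N c π s j + c j ≤ startTime N c π s j' := by
  unfold startTime
  have hk : π (π.symm j) = j := π.apply_symm_apply j
  have hmem : π.symm j ∉ Finset.univ.filter (fun l : Fin N => l < π.symm j) := by simp
  have hsub : insert (π.symm j) (Finset.univ.filter (fun l : Fin N => l < π.symm j))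
      ⊆ Finset.univ.filter (fun l : Fin N => l < π.symm j') := by
    intro x hx
    simp only [Finset.mem_insert, Finset.mem_filter, Finset.mem_univ, true_and] at *
    rcases hx with rfl | hx
    · exact h
    · exact lt_trans hx h
  have hle : ∑ l ∈ insert (π.symm j) (Finset.univ.filter (fun l : Fin N => l < π.symm j)),
      c (π l) ≤ ∑ l ∈ Finset.univ.filter (fun l : Fin N => l < π.symm j'), c (π l) :=
    Finset.sum_le_sum_of_subset hsub
  rw [Finset.sum_insert hmem, hk] at hle
  omega

lemma st_pred (c : Fin N → ℕ) (π : Fin N ≃ Fin N) (s : ℕ) {j : Fin N}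
    (h : s < startTime N c π s j) :
    ∃ j', j' ≠ j ∧ startTime N c π s j' + c j' = startTime N c π s j := by
  have hk0 : 0 < (π.symm j : ℕ) := by
    by_contra hk
    have hk' : (π.symm j : ℕ) = 0 := by omega
    have hemp : Finset.univ.filter (fun l : Fin N => l < π.symm j) = ∅ := by
      ext x; simp [Fin.lt_def, hk']
    unfold startTime at h
    rw [hemp] at h
    simp at h
  have hkN : ((π.symm j : Fin N) : ℕ) < N := (π.symm j).isLt
  refine ⟨π ⟨((π.symm j : Fin N) : ℕ) - 1, by omega⟩, ?_, ?_⟩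
  · intro he
    have h2 := congrArg π.symm he
    rw [Equiv.symm_apply_apply] at h2
    have h3 := congrArg Fin.val h2
    simp only at h3
    omega
  · unfold startTime
    rw [Equiv.symm_apply_apply]
    have h2 : Finset.univ.filter (fun l : Fin N => l < π.symm j)
        = insert (⟨((π.symm j : Fin N) : ℕ) - 1, by omega⟩ : Fin N)
            (Finset.univ.filter
              (fun l : Fin N => l < (⟨((π.symm j : Fin N) : ℕ) - 1, by omega⟩ : Fin N))) := by
      ext x
      simp only [Finset.mem_filter, Finset.mem_univ, true_and, Finset.mem_insert, Fin.lt_def,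
        Fin.ext_iff]
      omega
    rw [h2, Finset.sum_insert (by simp [Fin.lt_def])]
    omega

lemma st_conflict (c : Fin N → ℕ) (π : Fin N ≃ Fin N) (s : ℕ) {j j' : Fin N}
    (hne : j ≠ j') (τ : ℕ)
    (h1 : startTime N c π s j ≤ τ) (h2 : τ < startTime N c π s j + c j)
    (h3 : startTime N c π s j' ≤ τ) (h4 : τ < startTime N c π s j' + c j') : False := by
  rcases lt_trichotomy (π.symm j) (π.symm j') with h | h | h
  · have := st_step c π s h; omega
  · exact hne (π.symm.injective h)
  · have := st_step c π s h; omega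

lemma st_inj (c : Fin N → ℕ) (π : Fin N ≃ Fin N) (s : ℕ) (hc : ∀ j, 0 < c j)
    {j j' : Fin N} (h : startTime N c π s j = startTime N c π s j') : j = j' := by
  rcases lt_trichotomy (π.symm j) (π.symm j') with hlt | he | hlt
  · have := st_step c π s hlt; have := hc j; omega
  · exact π.symm.injective he
  · have := st_step c π s hlt; have := hc j'; omega

end aux

def jX (m : ℕ) (i : Fin m) : Fin (3 * m) := ⟨i, by have := i.isLt; omega⟩
def jY (m : ℕ) (i : Fin m) : Fin (3 * m) := ⟨m + i, by have := i.isLt; omega⟩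
def jT (m : ℕ) (i : Fin m) : Fin (3 * m) := ⟨2 * m + i, by have := i.isLt; omega⟩

section vals
variable {m : ℕ} (sX sY t : Fin m → ℕ) (P : ℕ)

lemma jsA_X (i : Fin m) : jsA m t P (jX m i) = 1 := by
  unfold jsA jX
  rw [dif_pos (by have := i.isLt; simp; omega)]

lemma jsA_Y (i : Fin m) : jsA m t P (jY m i) = 1 := by
  unfold jsA jY
  rw [dif_pos (by have := i.isLt; simp; omega)]

lemma jsA_T (i : Fin m) : jsA m t P (jT m i) = t i + 3 * P := by
  unfold jsA jT
  rw [dif_neg (by simp)]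
  congr 1
  have : ∀ hh, (⟨2 * m + (i : ℕ) - 2 * m, hh⟩ : Fin m) = i := fun hh => Fin.ext (by simp)
  rw [this]

lemma jsB_X (i : Fin m) : jsB m sX sY P (jX m i) = sX i + P := by
  unfold jsB jX
  rw [dif_pos (by simpa using i.isLt)]

lemma jsB_Y (i : Fin m) : jsB m sX sY P (jY m i) = sY i + 2 * P := by
  unfold jsB jY
  rw [dif_neg (by simp), dif_pos (by have := i.isLt; simp; omega)]
  congr 1
  have : ∀ hh, (⟨m + (i : ℕ) - m, hh⟩ : Fin m) = i := fun hh => Fin.ext (by simp)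
  rw [this]

lemma jsB_T (i : Fin m) : jsB m sX sY P (jT m i) = 2 := by
  unfold jsB jT
  rw [dif_neg (by simp; omega), dif_neg (by simp)]

lemma jsRoute_X (i : Fin m) : jsRoute m (jX m i) = true := by
  unfold jsRoute jX
  simp only [decide_eq_true_eq]
  exact Or.inl (by simpa using i.isLt)

lemma jsRoute_Y (i : Fin m) : jsRoute m (jY m i) = false := by
  unfold jsRoute jY
  simp only [decide_eq_false_iff_not]
  have := i.isLt
  simp
  omega

lemma jsRoute_T (i : Fin m) : jsRoute m (jT m i) = true := by
  unfold jsRoute jT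
  simp only [decide_eq_true_eq]
  exact Or.inr (by simp)

lemma jclass (j : Fin (3 * m)) :
    (∃ i, j = jX m i) ∨ (∃ i, j = jY m i) ∨ (∃ i, j = jT m i) := by
  have hj := j.isLt
  rcases lt_or_ge (j : ℕ) m with h | h
  · exact Or.inl ⟨⟨j, h⟩, Fin.ext rfl⟩
  rcases lt_or_ge (j : ℕ) (2 * m) with h2 | h2
  · refine Or.inr (Or.inl ⟨⟨(j : ℕ) - m, by omega⟩, Fin.ext ?_⟩)
    simp [jY]; omega
  · refine Or.inr (Or.inr ⟨⟨(j : ℕ) - 2 * m, by omega⟩, Fin.ext ?_⟩)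
    simp [jT]; omega

lemma jX_ne_jT (i i' : Fin m) : jX m i ≠ jT m i' := by
  intro h
  have := congrArg Fin.val h
  have h1 := i.isLt
  simp [jX, jT] at this
  omega

lemma jY_ne_jT (i i' : Fin m) : jY m i ≠ jT m i' := by
  intro h
  have := congrArg Fin.val h
  have h1 := i.isLt
  simp [jY, jT] at this
  omega

lemma jT_ne_jT {i i' : Fin m} (h : i ≠ i') : jT m i ≠ jT m i' := by
  intro he
  have := congrArg Fin.val he
  simp [jT] at this
  exact h (Fin.ext this)

lemma jT_inj {i i' : Fin m} (h : jT m i = jT m i') : i = i' := by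
  have := congrArg Fin.val h
  simp [jT] at this
  exact Fin.ext this

lemma jY_inj {i i' : Fin m} (h : jY m i = jY m i') : i = i' := by
  have := congrArg Fin.val h
  simp [jY] at this
  exact Fin.ext this

lemma jsB_val_X (j : Fin (3 * m)) (i : Fin m)
    (h : (j : ℕ) = (i : ℕ)) : jsB m sX sY P j = sX i + P := by
  unfold jsB
  rw [dif_pos (by rw [h]; exact i.isLt)]
  congr 1
  exact congrArg sX (Fin.ext h)

lemma jsB_val_Y (j : Fin (3 * m)) (i : Fin m)
    (h : (j : ℕ) = m + (i : ℕ)) : jsB m sX sY P j = sY i + 2 * P := by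
  unfold jsB
  rw [dif_neg (by omega), dif_pos (by have := i.isLt; omega)]
  congr 1
  exact congrArg sY (Fin.ext (by simp [h]))

lemma jsB_val_T (j : Fin (3 * m))
    (h : 2 * m ≤ (j : ℕ)) : jsB m sX sY P j = 2 := by
  unfold jsB
  rw [dif_neg (by omega), dif_neg (by omega)]

lemma sumB : ∑ j, jsB m sX sY P j = ∑ i, sX i + ∑ i, sY i + 3 * (m * P) + 2 * m := by
  have hcast : m + m + m = 3 * m := by ring
  let E : (Fin m ⊕ Fin m) ⊕ Fin m ≃ Fin (3 * m) :=
    ((finSumFinEquiv.sumCongr (Equiv.refl (Fin m))).trans finSumFinEquiv).trans (finCongr hcast)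
  have hE : ∑ j, jsB m sX sY P j = ∑ z, jsB m sX sY P (E z) :=
    (Fintype.sum_equiv E (fun z => jsB m sX sY P (E z)) (jsB m sX sY P) (fun z => rfl)).symm
  rw [hE, Fintype.sum_sum_type, Fintype.sum_sum_type]
  have e1 : ∀ i : Fin m, jsB m sX sY P (E (Sum.inl (Sum.inl i))) = sX i + P := by
    intro i
    refine jsB_val_X sX sY P _ i ?_
    simp [E, finSumFinEquiv]
  have e2 : ∀ i : Fin m, jsB m sX sY P (E (Sum.inl (Sum.inr i))) = sY i + 2 * P := by
    intro i
    refine jsB_val_Y sX sY P _ i ?_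
    simp [E, finSumFinEquiv]
    omega
  have e3 : ∀ i : Fin m, jsB m sX sY P (E (Sum.inr i)) = 2 := by
    intro i
    refine jsB_val_T sX sY P _ ?_
    simp [E, finSumFinEquiv]
    omega
  rw [Finset.sum_congr rfl (fun i _ => e1 i), Finset.sum_congr rfl (fun i _ => e2 i),
    Finset.sum_congr rfl (fun i _ => e3 i)]
  rw [Finset.sum_add_distrib, Finset.sum_add_distrib, Finset.sum_const, Finset.sum_const,
    Finset.sum_const, Finset.card_univ, Fintype.card_fin, smul_eq_mul, smul_eq_mul, smul_eq_mul]
  ring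

end vals

/-- if the constructed two-machine job shop instance has a feasible
no-idle/no-wait schedule with makespan at most `L + 1`, the NMTS instance
`(sX, sY, t)` has a solution. -/
theorem stmt_16 (m : ℕ) (hm : 1 ≤ m) (sX sY t : Fin m → ℕ)
    (hsX : ∀ i, 0 < sX i) (hsY : ∀ i, 0 < sY i) (ht : ∀ i, 0 < t i)
    (hsum : ∑ i, t i = ∑ i, sX i + ∑ i, sY i)
    (P L : ℕ) (hP : P = ∑ i, t i + ∑ i, sX i + ∑ i, sY i)
    (hL : L = 2 * m + 3 * m * P + ∑ i, t i)
    (hsched : ∃ (π1 π2 : Fin (3 * m) ≃ Fin (3 * m)) (s1 s2 : ℕ),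
      JSSchedule (3 * m) (jsA m t P) (jsB m sX sY P) (jsRoute m) π1 π2 s1 s2 ∧
      max (s1 + ∑ j, jsA m t P j) (s2 + ∑ j, jsB m sX sY P j) ≤ L + 1) :
    ∃ α β : Fin m ≃ Fin m, ∀ i, sX (α i) + sY (β i) = t i := by
  obtain ⟨π1, π2, s1, s2, hsch, hms⟩ := hsched
  unfold JSSchedule at hsch
  -- basic bounds
  have htsum : ∀ i, t i ≤ ∑ k, t k :=
    fun i => Finset.single_le_sum (fun k _ => Nat.zero_le _) (Finset.mem_univ i)
  have hsXsum : ∀ i, sX i ≤ ∑ k, sX k :=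
    fun i => Finset.single_le_sum (fun k _ => Nat.zero_le _) (Finset.mem_univ i)
  have hsYsum : ∀ i, sY i ≤ ∑ k, sY k :=
    fun i => Finset.single_le_sum (fun k _ => Nat.zero_le _) (Finset.mem_univ i)
  have hmX : m ≤ ∑ k, sX k := by
    calc m = ∑ _k : Fin m, 1 := by simp
    _ ≤ ∑ k, sX k := Finset.sum_le_sum (fun k _ => hsX k)
  have hmY : m ≤ ∑ k, sY k := by
    calc m = ∑ _k : Fin m, 1 := by simp
    _ ≤ ∑ k, sY k := Finset.sum_le_sum (fun k _ => hsY k)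
  have hmt : m ≤ ∑ k, t k := by
    calc m = ∑ _k : Fin m, 1 := by simp
    _ ≤ ∑ k, t k := Finset.sum_le_sum (fun k _ => ht k)
  have hP2 : P = 2 * ∑ k, t k := by omega
  -- s2 ≤ 1
  have hSumB : ∑ j, jsB m sX sY P j = L := by
    rw [sumB]
    have h3 : 3 * m * P = 3 * (m * P) := by ring
    omega
  have hs2 : s2 ≤ 1 := by
    have h2 := le_max_right (s1 + ∑ j, jsA m t P j) (s2 + ∑ j, jsB m sX sY P j)
    have h3 := le_trans h2 hms
    omega
  have hXw : ∀ i, startTime (3 * m) (jsB m sX sY P) π2 s2 (jX m i)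
      = startTime (3 * m) (jsA m t P) π1 s1 (jX m i) + 1 := by
    intro i
    have h := hsch (jX m i)
    rw [jsRoute_X] at h
    simpa [jsA_X t P i] using h
  have hYw : ∀ i, startTime (3 * m) (jsA m t P) π1 s1 (jY m i)
      = startTime (3 * m) (jsB m sX sY P) π2 s2 (jY m i) + (sY i + 2 * P) := by
    intro i
    have h := hsch (jY m i)
    rw [jsRoute_Y] at h
    simpa [jsB_Y sX sY P i] using h
  have hTw : ∀ i, startTime (3 * m) (jsB m sX sY P) π2 s2 (jT m i)
      = startTime (3 * m) (jsA m t P) π1 s1 (jT m i) + (t i + 3 * P) := by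
    intro i
    have h := hsch (jT m i)
    rw [jsRoute_T] at h
    simpa [jsA_T t P i] using h
  -- the key step
  have key : ∀ i : Fin m, ∃ ai bi : Fin m,
      startTime (3 * m) (jsB m sX sY P) π2 s2 (jY m bi) + (sY bi + 2 * P)
        = startTime (3 * m) (jsB m sX sY P) π2 s2 (jT m i) ∧
      startTime (3 * m) (jsB m sX sY P) π2 s2 (jX m ai) + (sX ai + P)
        = startTime (3 * m) (jsB m sX sY P) π2 s2 (jY m bi) ∧
      t i ≤ sX ai + sY bi := by
    intro i
    have hTi := hTw i
    have hti := ht i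
    have htiU := htsum i
    have hs1T := st_ge (jsA m t P) π1 s1 (jT m i)
    -- step 1: predecessor of the 2-op of T i on M2
    have hpred1 : s2 < startTime (3 * m) (jsB m sX sY P) π2 s2 (jT m i) := by omega
    obtain ⟨j1, hne1, heq1⟩ := st_pred (jsB m sX sY P) π2 s2 hpred1
    rcases jclass j1 with ⟨c, rfl⟩ | ⟨b0, rfl⟩ | ⟨c, rfl⟩
    · -- x-op immediately before the 2-op : M1 conflict
      exfalso
      rw [jsB_X sX sY P c] at heq1
      have hXc := hXw c
      have hcU := hsXsum c
      refine st_conflict (jsA m t P) π1 s1 (jX_ne_jT c i)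
        (startTime (3 * m) (jsA m t P) π1 s1 (jX m c)) (le_refl _) ?_ ?_ ?_
      · rw [jsA_X t P c]; omega
      · omega
      · rw [jsA_T t P i]; omega
    swap
    · -- 2-op immediately before the 2-op : M1 conflict of the two t-jobs
      exfalso
      rw [jsB_T sX sY P c] at heq1
      have hTc := hTw c
      have hcU := htsum c
      have htc := ht c
      have hci : c ≠ i := by
        intro he
        rw [he] at heq1
        omega
      refine st_conflict (jsA m t P) π1 s1 (jT_ne_jT hci)
        (max (startTime (3 * m) (jsA m t P) π1 s1 (jT m c))
          (startTime (3 * m) (jsA m t P) π1 s1 (jT m i))) (le_max_left _ _) ?_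
        (le_max_right _ _) ?_
      · rw [jsA_T t P c]; omega
      · rw [jsA_T t P i]; omega
    · -- y-op immediately before the 2-op; now find the op before the y-op
      rw [jsB_Y sX sY P b0] at heq1
      have hb0U := hsYsum b0
      have hpred2 : s2 < startTime (3 * m) (jsB m sX sY P) π2 s2 (jY m b0) := by omega
      obtain ⟨j2, hne2, heq2⟩ := st_pred (jsB m sX sY P) π2 s2 hpred2
      rcases jclass j2 with ⟨a0, rfl⟩ | ⟨c, rfl⟩ | ⟨c, rfl⟩
      · -- x-op before the y-op : done, prove the inequality
        rw [jsB_X sX sY P a0] at heq2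
        have hXa := hXw a0
        have haU := hsXsum a0
        refine ⟨a0, b0, heq1, heq2, ?_⟩
        by_contra hcon
        push_neg at hcon
        refine st_conflict (jsA m t P) π1 s1 (jX_ne_jT a0 i)
          (startTime (3 * m) (jsA m t P) π1 s1 (jX m a0)) (le_refl _) ?_ ?_ ?_
        · rw [jsA_X t P a0]; omega
        · omega
        · rw [jsA_T t P i]; omega
      · -- y-op before the y-op : M1 conflict of Y c's unit op with T i
        exfalso
        rw [jsB_Y sX sY P c] at heq2
        have hYc := hYw c
        have hcU := hsYsum c
        refine st_conflict (jsA m t P) π1 s1 (jY_ne_jT c i)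
          (startTime (3 * m) (jsA m t P) π1 s1 (jY m c)) (le_refl _) ?_ ?_ ?_
        · rw [jsA_Y t P c]; omega
        · omega
        · rw [jsA_T t P i]; omega
      · -- 2-op before the y-op : M1 conflict of the two t-jobs
        exfalso
        rw [jsB_T sX sY P c] at heq2
        have hTc := hTw c
        have hcU := htsum c
        have htc := ht c
        have hci : c ≠ i := by
          intro he
          rw [he] at heq2
          omega
        refine st_conflict (jsA m t P) π1 s1 (jT_ne_jT hci)
          (max (startTime (3 * m) (jsA m t P) π1 s1 (jT m c))
            (startTime (3 * m) (jsA m t P) π1 s1 (jT m i))) (le_max_left _ _) ?_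
          (le_max_right _ _) ?_
        · rw [jsA_T t P c]; omega
        · rw [jsA_T t P i]; omega
  choose A B hB hA hge using key
  have hbpos : ∀ j, 0 < jsB m sX sY P j := by
    intro j
    rcases jclass j with ⟨c, rfl⟩ | ⟨c, rfl⟩ | ⟨c, rfl⟩
    · rw [jsB_X sX sY P c]; have := hsX c; omega
    · rw [jsB_Y sX sY P c]; have := hsY c; omega
    · rw [jsB_T sX sY P c]; omega
  have hBinj : Function.Injective B := by
    intro i i' h
    have h1 := hB i
    rw [h] at h1
    have h2 := hB i'
    have h3 : startTime (3 * m) (jsB m sX sY P) π2 s2 (jT m i)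
        = startTime (3 * m) (jsB m sX sY P) π2 s2 (jT m i') := by omega
    exact jT_inj (st_inj (jsB m sX sY P) π2 s2 hbpos h3)
  have hAinj : Function.Injective A := by
    intro i i' h
    have h1 := hA i
    rw [h] at h1
    have h2 := hA i'
    have h3 : startTime (3 * m) (jsB m sX sY P) π2 s2 (jY m (B i))
        = startTime (3 * m) (jsB m sX sY P) π2 s2 (jY m (B i')) := by omega
    exact hBinj (jY_inj (st_inj (jsB m sX sY P) π2 s2 hbpos h3))
  have hAbij : Function.Bijective A := Finite.injective_iff_bijective.mp hAinj
  have hBbij : Function.Bijective B := Finite.injective_iff_bijective.mp hBinj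
  have hsump : ∑ i, (sX (A i) + sY (B i)) = ∑ i, t i := by
    rw [Finset.sum_add_distrib, Function.Bijective.sum_comp hAbij sX,
      Function.Bijective.sum_comp hBbij sY]
    omega
  have heach : ∀ i, sX (A i) + sY (B i) = t i := by
    intro i
    by_contra hne
    have hlt : t i < sX (A i) + sY (B i) := lt_of_le_of_ne (hge i) (fun h => hne h.symm)
    have hstrict : ∑ k, t k < ∑ k, (sX (A k) + sY (B k)) :=
      Finset.sum_lt_sum (fun k _ => hge k) ⟨i, Finset.mem_univ i, hlt⟩
    omega
  exact ⟨Equiv.ofBijective A hAbij, Equiv.ofBijective B hBbij, heach⟩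
end
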